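/- Let a be a real number with a ≠ 1/2, let n be a natural number, let π be a probability vector on {0,1}^n, and write C = C_a(n). Then Tr( C⁻¹ · diag(Cπ) · (C⁻¹)ᵀ ) = ((a² + (1−a)²)/(2a−1)²)^n. -/

import Mathlib

open Matrix

/-- `Cmat a b n` is the `2^n × 2^n` real matrix indexed by bit strings `x, y ∈ {0,1}^n`
whose `(x, y)` entry is `a ^ (n - d) * b ^ d`, where `d` is the Hamming distance
between `x` and `y`. -/
def Cmat (a b : ℝ) (n : ℕ) : Matrix (Fin n → Fin 2) (Fin n → Fin 2) ℝ :=
  Matrix.of fun x y => a ^ (n - hammingDist x y) * b ^ hammingDist x y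

/-- `CmatB a n` abbreviates `Cmat a (1 - a) n`. -/
def CmatB (a : ℝ) (n : ℕ) : Matrix (Fin n → Fin 2) (Fin n → Fin 2) ℝ :=
  Cmat a (1 - a) n

/-!
`C_{a,b}(n)` is the `n`-th Kronecker power of `[[a, b], [b, a]]`, so these matrices form a
commutative algebra closed under products, transposes and (when `a² ≠ b²`) inverses. For
`b = 1 - a` the inverse is `C_{a,b}(n)` with `(a, b)` replaced by `(a, -b) / (2a - 1)`, hence
`C⁻ᵀ C⁻¹` is again of this form, with diagonal entries `((a² + b²) / (2a - 1)²)^n`.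
Cycling the trace reduces the claim to `∑ₓ (Cπ)ₓ = (a + b)^n ∑ₓ πₓ = 1`.
-/

section Cmat

variable (a b : ℝ) (n : ℕ)

lemma Cmat_apply_eq_prod (x y : Fin n → Fin 2) :
    Cmat a b n x y = ∏ i, if x i = y i then a else b := by
  have hdist : hammingDist x y = (Finset.univ.filter fun i => ¬x i = y i).card := rfl
  have hagree : (Finset.univ.filter fun i => x i = y i).card = n - hammingDist x y := by
    have := Finset.card_filter_add_card_filter_not (s := Finset.univ) (fun i => x i = y i)
    rw [Finset.card_univ, Fintype.card_fin] at this
    omega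
  rw [Cmat, Finset.prod_ite, Finset.prod_const, Finset.prod_const, of_apply, hagree, hdist]

lemma Cmat_apply_self (x : Fin n → Fin 2) : Cmat a b n x x = a ^ n := by
  simp [Cmat, hammingDist_self]

lemma Cmat_mul (c d : ℝ) :
    Cmat a b n * Cmat c d n = Cmat (a * c + b * d) (a * d + b * c) n := by
  ext x z
  have hcoord (u v : Fin 2) :
      ∑ t : Fin 2, (if u = t then a else b) * (if t = v then c else d) =
        if u = v then a * c + b * d else a * d + b * c := by
    fin_cases u <;> fin_cases v <;> simp [Fin.sum_univ_two] <;> ring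
  simp only [mul_apply, Cmat_apply_eq_prod, ← Finset.prod_mul_distrib]
  rw [← Fintype.prod_sum fun i t => (if x i = t then a else b) * (if t = z i then c else d)]
  exact Finset.prod_congr rfl fun i _ => hcoord (x i) (z i)

lemma Cmat_one_zero : Cmat 1 0 n = 1 := by
  ext x y
  rcases eq_or_ne x y with rfl | hxy
  · simp [Cmat_apply_self]
  · simp [Cmat, one_apply_ne hxy, zero_pow (hammingDist_ne_zero.mpr hxy)]

lemma transpose_Cmat : (Cmat a b n)ᵀ = Cmat a b n := by
  ext x y
  simp [Cmat, hammingDist_comm x y]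

lemma inv_Cmat (h : a ^ 2 ≠ b ^ 2) :
    (Cmat a b n)⁻¹ = Cmat (a / (a ^ 2 - b ^ 2)) (-b / (a ^ 2 - b ^ 2)) n := by
  have hD : a ^ 2 - b ^ 2 ≠ 0 := sub_ne_zero.mpr h
  apply inv_eq_right_inv
  rw [Cmat_mul, ← Cmat_one_zero n]
  congr 1
  · field_simp
    ring
  · ring

lemma sum_Cmat_apply_left (y : Fin n → Fin 2) :
    ∑ x, Cmat a b n x y = (a + b) ^ n := by
  simp only [Cmat_apply_eq_prod]
  rw [← Fintype.prod_sum (fun i t => if t = y i then a else b)]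
  have hcoord (v : Fin 2) : ∑ t : Fin 2, (if t = v then a else b) = a + b := by
    fin_cases v <;> simp [Fin.sum_univ_two, add_comm]
  simp [hcoord]

lemma sum_Cmat_mulVec (v : (Fin n → Fin 2) → ℝ) :
    ∑ x, (Cmat a b n *ᵥ v) x = (a + b) ^ n * ∑ x, v x := by
  simp only [mulVec, dotProduct]
  rw [Finset.sum_comm, Finset.mul_sum]
  simp only [← Finset.sum_mul, sum_Cmat_apply_left]

lemma trace_Cmat_mul_diagonal (v : (Fin n → Fin 2) → ℝ) :
    trace (Cmat a b n * diagonal v) = a ^ n * ∑ x, v x := by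
  simp [trace, mul_diagonal, Cmat_apply_self, Finset.mul_sum]

end Cmat

theorem trace_inv_diag_inv_general (a : ℝ) (ha : a ≠ 1 / 2) (n : ℕ)
    (π : (Fin n → Fin 2) → ℝ) (hsum : ∑ x, π x = 1) :
    Matrix.trace ((CmatB a n)⁻¹ * Matrix.diagonal ((CmatB a n).mulVec π) * ((CmatB a n)⁻¹)ᵀ)
      = ((a ^ 2 + (1 - a) ^ 2) / (2 * a - 1) ^ 2) ^ n := by
  have hD : 2 * a - 1 ≠ 0 := fun h => ha (by linarith)
  have hdet : a ^ 2 - (1 - a) ^ 2 = 2 * a - 1 := by ring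
  have hsq : a ^ 2 ≠ (1 - a) ^ 2 := sub_ne_zero.mp (hdet ▸ hD)
  rw [CmatB, inv_Cmat _ _ _ hsq, transpose_Cmat, trace_mul_cycle, Cmat_mul,
    trace_Cmat_mul_diagonal, sum_Cmat_mulVec, hsum, hdet]
  field_simp
  ring

theorem trace_inv_diag_inv (a : ℝ) (ha : a ≠ 1 / 2) (n : ℕ)
    (π : (Fin n → Fin 2) → ℝ) (hπ : ∀ x, 0 ≤ π x) (hsum : ∑ x, π x = 1) :
    Matrix.trace ((CmatB a n)⁻¹ * Matrix.diagonal ((CmatB a n).mulVec π) * ((CmatB a n)⁻¹)ᵀ)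
      = ((a ^ 2 + (1 - a) ^ 2) / (2 * a - 1) ^ 2) ^ n :=
  trace_inv_diag_inv_general a ha n π hsum
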